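/- arXiv:2502.18797 — 2 statements merged into one kernel-verified Lean document; each statement's English description precedes it below -/
import Mathlib

section
/- Let G be a connected plane graph with minimum degree at least 3 that contains no cycle of length 4, no cycle of length 7, no cycle of length 9, and no 5-cycle normally adjacent to a 3-cycle. Then the boundary walk of every 8-face of G consists either of a single 8-cycle, or of two 3-cycles together with a cut edge traversed twice, or of one 3-cycle and one 5-cycle (meeting at a cut vertex). -/
/-!
The boundary walk `v 0, v 1, …, v 8 = v 0` of an `8`-face never turns back (minimum degree at
least `2`) and traverses each dart only once. Hence `v i = v j` is impossible at distance
`1, 2, 6, 7` along the walk, and at distance `4` it would close a `4`-cycle; repetitions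
therefore only occur at distance `3` or `5`, i.e. they cut off triangles. If `v 0 v 1 v 2` is a
triangle, the rest `v 3 … v 8` is a closed walk of length `5`, and any repetition in it other
than a second triangle `v 4 v 5 v 6` forces a repeated dart, a backtrack or a `4`-cycle.
-/

namespace Paper

open SimpleGraph

variable {V : Type*}

/-- The fixed-point-free involution on darts reversing each dart. -/
def dartFlip (G : SimpleGraph V) : Equiv.Perm G.Dart :=
  ⟨SimpleGraph.Dart.symm, SimpleGraph.Dart.symm,
    fun d => SimpleGraph.Dart.symm_symm d, fun d => SimpleGraph.Dart.symm_symm d⟩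

/-- A combinatorial embedding (rotation system) of a simple graph: a permutation of the
darts whose cycles are exactly the sets of darts emanating from a common vertex. -/
structure PlaneEmbedding (G : SimpleGraph V) where
  rot : Equiv.Perm G.Dart
  fst_rot : ∀ d : G.Dart, (rot d).fst = d.fst
  rot_cyclic : ∀ d e : G.Dart, d.fst = e.fst → rot.SameCycle d e

/-- The face permutation of a combinatorial embedding; its orbits are the (boundary walks
of the) faces of the embedding. -/
def PlaneEmbedding.facePerm {G : SimpleGraph V} (E : PlaneEmbedding G) : Equiv.Perm G.Dart :=
  E.rot * dartFlip G

/-- The face (as its set of boundary darts, i.e. the orbit of the face permutation)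
containing a given dart. -/
def faceOf {G : SimpleGraph V} (E : PlaneEmbedding G) (d : G.Dart) : Set G.Dart :=
  {e | E.facePerm.SameCycle d e}

/-- The length of the boundary walk of the face containing a given dart; a `k`-face is a
face whose boundary walk has length `k`, i.e. whose dart-orbit has size `k`. -/
noncomputable def faceSize {G : SimpleGraph V} (E : PlaneEmbedding G) (d : G.Dart) : ℕ :=
  (faceOf E d).ncard

/-- The number of faces of the embedding lying in a given connected component. -/
noncomputable def componentFaceCount {G : SimpleGraph V} (E : PlaneEmbedding G)
    (c : G.ConnectedComponent) : ℕ :=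
  Nat.card (Quotient (Setoid.comap
    (Subtype.val : {d : G.Dart // G.connectedComponentMk d.fst = c} → G.Dart)
    (Equiv.Perm.SameCycle.setoid E.facePerm)))

/-- The embedding is plane (genus zero): Euler's formula `V - E + F = 2` holds on each
connected component containing an edge (stated as `2V + 2F = #darts + 4`, using that the
number of darts is twice the number of edges). -/
def PlaneEmbedding.IsPlane {G : SimpleGraph V} (E : PlaneEmbedding G) : Prop :=
  ∀ c : G.ConnectedComponent, (∃ d : G.Dart, G.connectedComponentMk d.fst = c) →
    2 * {v : V | G.connectedComponentMk v = c}.ncard + 2 * componentFaceCount E c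
      = {d : G.Dart | G.connectedComponentMk d.fst = c}.ncard + 4

/-- `G` is a planar graph: it admits a plane (genus-zero) combinatorial embedding. -/
def IsPlanar (G : SimpleGraph V) : Prop :=
  ∃ E : PlaneEmbedding G, E.IsPlane

/-- `G` has no cycle of length `n`. -/
def NoCycleLen (G : SimpleGraph V) (n : ℕ) : Prop :=
  ∀ (v : V) (c : G.Walk v v), c.IsCycle → c.length ≠ n

/-- Two cycles (given as closed walks) are normally adjacent: their intersection is
isomorphic to `K₂`, i.e. they share exactly one edge together with its two endpoints. -/
def NormAdjWalks (G : SimpleGraph V) {a b : V} (c₁ : G.Walk a a) (c₂ : G.Walk b b) : Prop :=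
  ∃ x y : V, x ≠ y ∧ s(x, y) ∈ c₁.edges ∧ s(x, y) ∈ c₂.edges ∧
    (∀ z : V, (z ∈ c₁.support ∧ z ∈ c₂.support) ↔ (z = x ∨ z = y))

/-- `G` has no `5`-cycle normally adjacent to a `3`-cycle. -/
def No5CycleNormAdj3 (G : SimpleGraph V) : Prop :=
  ∀ (a b : V) (c₁ : G.Walk a a) (c₂ : G.Walk b b),
    c₁.IsCycle → c₁.length = 5 → c₂.IsCycle → c₂.length = 3 →
      ¬ NormAdjWalks G c₁ c₂

/-- `d` lists the boundary darts of a face in order, and this boundary is the closed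
walk `v 0, v 1, …, v (n-1), v 0`. -/
def FaceTraversal {G : SimpleGraph V} (E : PlaneEmbedding G) {n : ℕ}
    (v : ZMod n → V) (d : ZMod n → G.Dart) : Prop :=
  (∀ i, (d i).toProd = (v i, v (i + 1))) ∧ ∀ i, E.facePerm (d i) = d (i + 1)

/-- The cycle `v 0, v 1, …, v (n-1), v 0` (with distinct vertices) bounds a face of the
embedding (traversed in one of the two possible directions). -/
def CycleBoundsFace {G : SimpleGraph V} (E : PlaneEmbedding G) {n : ℕ}
    (v : ZMod n → V) : Prop :=
  Function.Injective v ∧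
    ((∃ d, FaceTraversal E v d) ∨ (∃ d, FaceTraversal E (fun i => v (-i)) d))

/-- The `i`-th vertex of the boundary walk of the face containing the dart `d0`. -/
def boundaryVert {G : SimpleGraph V} (E : PlaneEmbedding G) (d0 : G.Dart) (i : ℕ) : V :=
  ((E.facePerm ^ i) d0).fst

/-- The faces containing the darts `d1`, `d2` are adjacent: their boundaries share at
least one edge. -/
def FacesAdjacent {G : SimpleGraph V} (E : PlaneEmbedding G) (d1 d2 : G.Dart) : Prop :=
  ∃ e1 e2 : G.Dart, E.facePerm.SameCycle d1 e1 ∧ E.facePerm.SameCycle d2 e2 ∧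
    e1.edge = e2.edge

/-- The set of vertices on the boundary of the face containing the dart `d`. -/
def faceVerts {G : SimpleGraph V} (E : PlaneEmbedding G) (d : G.Dart) : Set V :=
  {x | ∃ e : G.Dart, E.facePerm.SameCycle d e ∧ e.fst = x}

/-- The set of edges on the boundary of the face containing the dart `d`. -/
def faceEdges {G : SimpleGraph V} (E : PlaneEmbedding G) (d : G.Dart) : Set (Sym2 V) :=
  {s | ∃ e : G.Dart, E.facePerm.SameCycle d e ∧ e.edge = s}

section Configs

variable [Fintype V]

/-- Configuration (1): a `10`-cycle bounding a face together with a `3`-cycle bounding a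
face, normally adjacent to it along one edge, all eleven vertices having degree `3`. -/
def Config1 (G : SimpleGraph V) [DecidableRel G.Adj] (E : PlaneEmbedding G) : Prop :=
  ∃ (v : ZMod 10 → V) (w : ZMod 3 → V) (u : V),
    CycleBoundsFace E v ∧ CycleBoundsFace E w ∧
    ({w 0, w 1, w 2} : Set V) = {v 0, v 1, u} ∧ u ∉ Set.range v ∧
    (∀ i, G.degree (v i) = 3) ∧ G.degree u = 3

/-- Configuration (2): two vertex-disjoint `10`-cycles `x₁…x₁₀` and `y₁…y₁₀` (indexed here
from `0`), each bounding a face, with edges `x₃y₃` and `x₁₀y₁₀`; all `xᵢ` have degree `3`,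
`y₃` and `y₁₀` have degree `4`, the other `yᵢ` have degree `3`. -/
def Config2 (G : SimpleGraph V) [DecidableRel G.Adj] (E : PlaneEmbedding G) : Prop :=
  ∃ x y : ZMod 10 → V,
    CycleBoundsFace E x ∧ CycleBoundsFace E y ∧
    Set.range x ∩ Set.range y = ∅ ∧
    G.Adj (x 2) (y 2) ∧ G.Adj (x 9) (y 9) ∧
    (∀ i, G.degree (x i) = 3) ∧
    G.degree (y 2) = 4 ∧ G.degree (y 9) = 4 ∧
    (∀ i, i ≠ 2 → i ≠ 9 → G.degree (y i) = 3)

/-- Configuration (3): an `8`-cycle bounding a face and a `5`-cycle bounding a face that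
are normally adjacent (sharing exactly one edge and its endpoints), all eleven vertices
having degree `3`. -/
def Config3 (G : SimpleGraph V) [DecidableRel G.Adj] (E : PlaneEmbedding G) : Prop :=
  ∃ (a : ZMod 8 → V) (b : ZMod 5 → V),
    CycleBoundsFace E a ∧ CycleBoundsFace E b ∧
    Set.range a ∩ Set.range b = {a 0, a 1} ∧
    (∃ j : ZMod 5, (b j = a 0 ∧ b (j + 1) = a 1) ∨ (b j = a 1 ∧ b (j + 1) = a 0)) ∧
    (∀ i, G.degree (a i) = 3) ∧ (∀ j, G.degree (b j) = 3)

end Configs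

open Classical in
/-- The function resulting from the operation `Delete_[u](G, f)`: every neighbour of `u`
loses one unit. -/
noncomputable def deleteFun (G : SimpleGraph V) (u : V) (f : V → ℤ) : V → ℤ :=
  fun v => if G.Adj u v then f v - 1 else f v

open Classical in
/-- The function resulting from the operation `DeleteSave_[u; w](G, f)`: every neighbour
of `u` except `w` loses one unit. -/
noncomputable def deleteSaveFun (G : SimpleGraph V) (u w : V) (f : V → ℤ) : V → ℤ :=
  fun v => if G.Adj u v ∧ v ≠ w then f v - 1 else f v

/-- All vertices of the subgraph of `G` induced on `S` can be removed by a sequence of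
legal applications of the `Delete` and `DeleteSave` operations, starting from the value
function `f`. -/
inductive WeaklyReducible (G : SimpleGraph V) : Set V → (V → ℤ) → Prop
  | empty (f : V → ℤ) : WeaklyReducible G ∅ f
  | delete (S : Set V) (f : V → ℤ) (u : V) (hu : u ∈ S)
      (hnn : ∀ v ∈ S \ {u}, 0 ≤ deleteFun G u f v)
      (h : WeaklyReducible G (S \ {u}) (deleteFun G u f)) : WeaklyReducible G S f
  | deleteSave (S : Set V) (f : V → ℤ) (u w : V) (hu : u ∈ S) (hw : w ∈ S \ {u})
      (hadj : G.Adj u w) (hlt : f w < f u)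
      (hnn : ∀ v ∈ S \ {u}, 0 ≤ deleteSaveFun G u w f v)
      (h : WeaklyReducible G (S \ {u}) (deleteSaveFun G u w f)) : WeaklyReducible G S f

/-- `G` is weakly `d`-degenerate: all its vertices can be removed by a sequence of legal
applications of the `Delete` and `DeleteSave` operations, starting from the constant
function of value `d`. -/
def WeaklyDegenerate (G : SimpleGraph V) (d : ℤ) : Prop :=
  WeaklyReducible G Set.univ (fun _ => d)

/-- The canonical cover of `G` with `s = 2`: two disjoint copies of `G`, on vertex set
`V × Fin 2`, with `(u, i)` adjacent to `(v, j)` iff `uv ∈ E(G)` and `i = j`. -/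
def canonicalCover2 (G : SimpleGraph V) : SimpleGraph (V × Fin 2) where
  Adj a b := G.Adj a.1 b.1 ∧ a.2 = b.2
  symm := ⟨fun _ _ h => ⟨h.1.symm, h.2.symm⟩⟩
  loopless := ⟨fun a h => G.loopless.irrefl a.1 h.1⟩

/-- `T` is a strictly `f`-degenerate transversal-candidate set: every nonempty subgraph
`K` of the induced subgraph `H[T]` has a vertex `x` with `deg_K x < f x`. -/
def StrictlyFDegenerateOn {W : Type*} (H : SimpleGraph W) (f : W → ℕ) (T : Set W) : Prop :=
  ∀ K : H.Subgraph, K.verts ⊆ T → K.verts.Nonempty →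
    ∃ x ∈ K.verts, Nat.card (K.neighborSet x) < f x

end Paper

open SimpleGraph

theorem Equiv.Perm.pow_apply_eq_pow_apply_iff {α : Type*} [Finite α] (f : Equiv.Perm α)
    (x : α) (i j : ℕ) :
    (f ^ i) x = (f ^ j) x ↔ i % Function.minimalPeriod f x = j % Function.minimalPeriod f x := by
  have hpos := Function.minimalPeriod_pos_of_mem_periodicPts (f.injective.mem_periodicPts x)
  simp only [← Equiv.Perm.iterate_eq_pow]
  rw [← Function.iterate_mod_minimalPeriod_eq (n := i),
    ← Function.iterate_mod_minimalPeriod_eq (n := j)]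
  exact Function.iterate_eq_iterate_iff_of_lt_minimalPeriod (Nat.mod_lt _ hpos)
    (Nat.mod_lt _ hpos)

theorem Equiv.Perm.minimalPeriod_eq_ncard_setOf_sameCycle {α : Type*} [Finite α]
    (f : Equiv.Perm α) (x : α) :
    Function.minimalPeriod f x = {y | f.SameCycle x y}.ncard := by
  have horbit : {y | f.SameCycle x y}
      = (fun i : ℕ => (f ^ i) x) '' Set.Iio (Function.minimalPeriod f x) := by
    ext y
    constructor
    · rintro hy
      obtain ⟨i, -, rfl⟩ := hy.exists_pow_eq'
      have hpos := Function.minimalPeriod_pos_of_mem_periodicPts (f.injective.mem_periodicPts x)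
      exact ⟨i % Function.minimalPeriod f x, Nat.mod_lt _ hpos,
        (f.pow_apply_eq_pow_apply_iff x _ _).mpr (Nat.mod_mod _ _)⟩
    · rintro ⟨i, -, rfl⟩
      exact ⟨i, by simp⟩
  have hinj : Set.InjOn (fun i : ℕ => (f ^ i) x) (Set.Iio (Function.minimalPeriod f x)) :=
    fun i hi j hj hij => by
      simpa [Nat.mod_eq_of_lt hi, Nat.mod_eq_of_lt hj] using
        (f.pow_apply_eq_pow_apply_iff x i j).mp hij
  rw [horbit, hinj.ncard_image, Set.ncard_eq_toFinset_card', Set.toFinset_Iio,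
    Nat.card_Iio]

namespace Paper

variable {V : Type*} {G : SimpleGraph V}

theorem NoCycleLen.eq_or_eq_of_square (h4 : NoCycleLen G 4) {a b c d : V}
    (hab : G.Adj a b) (hbc : G.Adj b c) (hcd : G.Adj c d) (hda : G.Adj d a) :
    a = c ∨ b = d := by
  by_contra! hne
  refine h4 a (.cons hab (.cons hbc (.cons hcd (.cons hda .nil)))) ?_ rfl
  have := hab.ne; have := hbc.ne; have := hcd.ne; have := hda.ne
  rw [Walk.isCycle_def, Walk.isTrail_def]
  refine ⟨?_, by simp, ?_⟩
  · simp only [Walk.edges_cons, Walk.edges_nil, List.nodup_cons, List.mem_cons, Sym2.eq_iff]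
    grind
  · simp only [Walk.support_cons, Walk.support_nil, List.tail_cons, List.nodup_cons,
      List.mem_cons]
    grind

/-- The properties of the boundary walk `v 0, v 1, …` of an `n`-face in a graph of minimum
degree at least `2`: it never turns back along the edge it came from, and it traverses each
dart at most once per period. -/
structure IsFaceWalk (G : SimpleGraph V) (n : ℕ) (v : ℕ → V) : Prop where
  periodic : ∀ i, v (i + n) = v i
  adj : ∀ i, G.Adj (v i) (v (i + 1))
  ne_add_two : ∀ i, v i ≠ v (i + 2)
  dart_injective : ∀ i j, v i = v j → v (i + 1) = v (j + 1) → i % n = j % n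

namespace IsFaceWalk

variable {n : ℕ} {v : ℕ → V}

theorem shift (h : IsFaceWalk G n v) (k : ℕ) : IsFaceWalk G n (fun i => v (k + i)) where
  periodic i := by simpa only [add_assoc] using h.periodic (k + i)
  adj i := h.adj (k + i)
  ne_add_two i := h.ne_add_two (k + i)
  dart_injective i j hv hv' := Nat.ModEq.add_left_cancel' k (h.dart_injective _ _ hv hv')

theorem ne_add_one (h : IsFaceWalk G n v) (i : ℕ) : v i ≠ v (i + 1) :=
  (h.adj i).ne

theorem ne_add_four (h : IsFaceWalk G n v) (h4 : NoCycleLen G 4) (i : ℕ) :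
    v i ≠ v (i + 4) := by
  intro hv
  have hclose : G.Adj (v (i + 3)) (v i) := hv ▸ h.adj (i + 3)
  exact (h4.eq_or_eq_of_square (h.adj i) (h.adj (i + 1)) (h.adj (i + 2)) hclose).elim
    (h.ne_add_two i) (h.ne_add_two (i + 1))

theorem succ_ne_of_eq_add_three (h : IsFaceWalk G n v) (hn : ¬n ∣ 3) {i : ℕ}
    (h3 : v i = v (i + 3)) : v (i + 1) ≠ v (i + 4) := by
  intro hv
  have hmod : i + 0 ≡ i + 3 [MOD n] := h.dart_injective i (i + 3) h3 hv
  exact hn (Nat.modEq_zero_iff_dvd.mp (Nat.ModEq.add_left_cancel' i hmod).symm)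

theorem add_two_ne_of_eq_add_three (h : IsFaceWalk G n v) (hn : ¬n ∣ 3) (h4 : NoCycleLen G 4)
    {i : ℕ} (h3 : v i = v (i + 3)) : v (i + 2) ≠ v (i + 5) := by
  intro hv
  have hcd : G.Adj (v (i + 2)) (v (i + 4)) := hv ▸ (h.adj (i + 4)).symm
  have hda : G.Adj (v (i + 4)) (v i) := h3 ▸ (h.adj (i + 3)).symm
  exact (h4.eq_or_eq_of_square (h.adj i) (h.adj (i + 1)) hcd hda).elim
    (h.ne_add_two i) (h.succ_ne_of_eq_add_three hn h3)

theorem eq_add_three_or_eq_add_five (h : IsFaceWalk G 8 v) (h4 : NoCycleLen G 4) {i j : ℕ}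
    (hij : i < j) (hj : j < i + 8) (hv : v i = v j) : j = i + 3 ∨ j = i + 5 := by
  obtain ⟨t, rfl⟩ : ∃ t, j = i + t := ⟨j - i, by omega⟩
  have hv' : v (i + t) = v (i + 8) := hv.symm.trans (h.periodic i).symm
  obtain ⟨ht1, ht7⟩ : 1 ≤ t ∧ t ≤ 7 := by omega
  interval_cases t
  · exact absurd hv (h.ne_add_one i)
  · exact absurd hv (h.ne_add_two i)
  · exact .inl rfl
  · exact absurd hv (h.ne_add_four h4 i)
  · exact .inr rfl
  · exact absurd hv' (h.ne_add_two (i + 6))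
  · exact absurd hv' (h.ne_add_one (i + 7))

theorem injective_of_forall_ne_add_three (h : IsFaceWalk G 8 v) (h4 : NoCycleLen G 4)
    (h3 : ∀ k, v k ≠ v (k + 3)) : Function.Injective fun i : Fin 8 => v i := by
  have hlt : ∀ i j : ℕ, i < j → j < 8 → v i ≠ v j := by
    intro i j hij hj hv
    rcases h.eq_add_three_or_eq_add_five h4 hij (by omega) hv with rfl | rfl
    · exact h3 i hv
    · exact h3 (i + 5) (hv.symm.trans (h.periodic i).symm)
  intro i j hv
  rcases lt_trichotomy (i : ℕ) j with hij | hij | hij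
  · exact absurd hv (hlt i j hij j.isLt)
  · exact Fin.ext hij
  · exact absurd hv.symm (hlt j i hij i.isLt)

theorem eq_of_eq_add_three (h : IsFaceWalk G 8 v) (h4 : NoCycleLen G 4) (h3 : v 0 = v 3)
    {i j : ℕ} (hij : i < j) (hj : j < 8) (hv : v i = v j) :
    (i = 0 ∧ j = 3) ∨ (i = 4 ∧ j = 7) := by
  have h83 : ¬(8 ∣ 3) := by norm_num
  have h11 : v 8 = v 11 := (h.periodic 0).trans (h3.trans (h.periodic 3).symm)
  rcases h.eq_add_three_or_eq_add_five h4 hij (by omega) hv with rfl | rfl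
  · have hi : i < 5 := by omega
    interval_cases i
    · exact .inl ⟨rfl, rfl⟩
    · exact absurd hv (h.succ_ne_of_eq_add_three h83 h3)
    · exact absurd hv (h.add_two_ne_of_eq_add_three h83 h4 h3)
    · exact absurd (hv.symm.trans (h3.symm.trans (h.periodic 0).symm)) (h.ne_add_two 6)
    · exact .inr ⟨rfl, rfl⟩
  · have hi : i < 3 := by omega
    interval_cases i
    · exact absurd (h3.symm.trans hv) (h.ne_add_two 3)
    · exact absurd h11 (h.add_two_ne_of_eq_add_three h83 h4 (hv.symm.trans (h.periodic 1).symm))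
    · exact absurd h11 (h.succ_ne_of_eq_add_three h83 (hv.symm.trans (h.periodic 2).symm))

theorem nodup_map_of_eq_add_three (h : IsFaceWalk G 8 v) (h4 : NoCycleLen G 4)
    (h3 : v 0 = v 3) (l : List ℕ) (hl : l.Nodup) (hl8 : ∀ i ∈ l, i < 8) (hl3 : 3 ∉ l)
    (hl47 : 4 ∈ l → 7 ∈ l → v 4 ≠ v 7) : (l.map v).Nodup := by
  have hlt : ∀ i ∈ l, ∀ j ∈ l, i < j → v i ≠ v j := by
    intro i hi j hj hij hv
    rcases h.eq_of_eq_add_three h4 h3 hij (hl8 j hj) hv with ⟨-, rfl⟩ | ⟨rfl, rfl⟩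
    · exact hl3 hj
    · exact hl47 hi hj hv
  refine hl.map_on fun i hi j hj hv => ?_
  rcases lt_trichotomy i j with hij | hij | hij
  · exact absurd hv (hlt i hi j hj hij)
  · exact hij
  · exact absurd hv.symm (hlt j hj i hi hij)

end IsFaceWalk

namespace PlaneEmbedding

theorem facePerm_apply_fst (E : PlaneEmbedding G) (d : G.Dart) :
    (E.facePerm d).fst = d.snd :=
  E.fst_rot d.symm

theorem rot_ne_self (E : PlaneEmbedding G) {d : G.Dart} [Fintype (G.neighborSet d.fst)]
    (hd : 2 ≤ G.degree d.fst) : E.rot d ≠ d := by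
  intro hfix
  rw [← card_neighborFinset_eq_degree] at hd
  obtain ⟨b, hb, hbne⟩ := Finset.exists_mem_ne hd d.snd
  obtain ⟨n, hn⟩ := E.rot_cyclic d ⟨(d.fst, b), (mem_neighborFinset _ _ _).mp hb⟩ rfl
  rw [Equiv.Perm.zpow_apply_eq_self_of_apply_eq_self hfix n] at hn
  exact hbne (congrArg (fun e : G.Dart => e.snd) hn).symm

end PlaneEmbedding

theorem boundaryVert_succ (E : PlaneEmbedding G) (d0 : G.Dart) (i : ℕ) :
    boundaryVert E d0 (i + 1) = ((E.facePerm ^ i) d0).snd := by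
  rw [boundaryVert, pow_succ', Equiv.Perm.mul_apply, E.facePerm_apply_fst]

theorem isFaceWalk_boundaryVert [Fintype V] [DecidableRel G.Adj] (E : PlaneEmbedding G)
    (hdeg : ∀ v, 2 ≤ G.degree v) (d0 : G.Dart) :
    IsFaceWalk G (faceSize E d0) (boundaryVert E d0) := by
  have hsize : faceSize E d0 = Function.minimalPeriod E.facePerm d0 :=
    (E.facePerm.minimalPeriod_eq_ncard_setOf_sameCycle d0).symm
  refine ⟨fun i => ?_, fun i => ?_, fun i hv => ?_, fun i j hfst hsnd => ?_⟩
  · rw [boundaryVert, boundaryVert, hsize, pow_add, Equiv.Perm.mul_apply,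
      ← Equiv.Perm.iterate_eq_pow E.facePerm (Function.minimalPeriod _ _),
      Function.iterate_minimalPeriod]
  · rw [boundaryVert_succ]
    exact ((E.facePerm ^ i) d0).adj
  · -- turning back along the edge just traversed means that the rotation fixes a dart
    set d := (E.facePerm ^ i) d0
    refine E.rot_ne_self (d := d.symm) (hdeg d.snd) (Dart.ext _ _ (Prod.ext ?_ ?_))
    · exact E.facePerm_apply_fst d
    · have hsnd := boundaryVert_succ E d0 (i + 1)
      rw [pow_succ', Equiv.Perm.mul_apply] at hsnd
      exact hsnd.symm.trans hv.symm
  · rw [boundaryVert_succ, boundaryVert_succ] at hsnd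
    rw [hsize, ← E.facePerm.pow_apply_eq_pow_apply_iff]
    exact Dart.ext _ _ (Prod.ext hfst hsnd)

end Paper

theorem statement13_general {V : Type*} [Fintype V] (G : SimpleGraph V) [DecidableRel G.Adj]
    (E : Paper.PlaneEmbedding G)
    (hmin : ∀ v : V, 3 ≤ G.degree v)
    (h4 : Paper.NoCycleLen G 4) :
    ∀ d0 : G.Dart, Paper.faceSize E d0 = 8 →
      (Function.Injective fun i : Fin 8 => Paper.boundaryVert E d0 i) ∨
      (∃ k : ℕ, Paper.boundaryVert E d0 k = Paper.boundaryVert E d0 (k + 3) ∧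
        Paper.boundaryVert E d0 (k + 4) = Paper.boundaryVert E d0 (k + 7) ∧
        [Paper.boundaryVert E d0 k, Paper.boundaryVert E d0 (k + 1),
         Paper.boundaryVert E d0 (k + 2), Paper.boundaryVert E d0 (k + 4),
         Paper.boundaryVert E d0 (k + 5), Paper.boundaryVert E d0 (k + 6)].Nodup) ∨
      (∃ k : ℕ, Paper.boundaryVert E d0 k = Paper.boundaryVert E d0 (k + 3) ∧
        [Paper.boundaryVert E d0 k, Paper.boundaryVert E d0 (k + 1),
         Paper.boundaryVert E d0 (k + 2), Paper.boundaryVert E d0 (k + 4),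
         Paper.boundaryVert E d0 (k + 5), Paper.boundaryVert E d0 (k + 6),
         Paper.boundaryVert E d0 (k + 7)].Nodup) := by
  intro d0 h8
  have hwalk : Paper.IsFaceWalk G 8 (Paper.boundaryVert E d0) :=
    h8 ▸ Paper.isFaceWalk_boundaryVert E (fun v => le_trans (by norm_num) (hmin v)) d0
  by_cases htri : ∃ k, Paper.boundaryVert E d0 k = Paper.boundaryVert E d0 (k + 3)
  · obtain ⟨k, hk⟩ := htri
    have hnodup := (hwalk.shift k).nodup_map_of_eq_add_three h4 hk
    by_cases hcut : Paper.boundaryVert E d0 (k + 4) = Paper.boundaryVert E d0 (k + 7)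
    · exact .inr <| .inl ⟨k, hk, hcut,
        hnodup [0, 1, 2, 4, 5, 6] (by decide) (by decide) (by decide) (by simp)⟩
    · exact .inr <| .inr ⟨k, hk,
        hnodup [0, 1, 2, 4, 5, 6, 7] (by decide) (by decide) (by decide) fun _ _ => hcut⟩
  · exact .inl (hwalk.injective_of_forall_ne_add_three h4 (not_exists.mp htri))

/-- The boundary walk of every 8-face consists of a single 8-cycle, or of two
3-cycles together with a cut edge traversed twice, or of a 3-cycle and a 5-cycle meeting
at a vertex. -/
theorem statement13 {V : Type*} [Fintype V] (G : SimpleGraph V) [DecidableRel G.Adj]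
    (hconn : G.Connected)
    (E : Paper.PlaneEmbedding G) (hE : E.IsPlane)
    (hmin : ∀ v : V, 3 ≤ G.degree v)
    (h4 : Paper.NoCycleLen G 4) (h7 : Paper.NoCycleLen G 7)
    (h9 : Paper.NoCycleLen G 9) (h53 : Paper.No5CycleNormAdj3 G) :
    ∀ d0 : G.Dart, Paper.faceSize E d0 = 8 →
      (Function.Injective fun i : Fin 8 => Paper.boundaryVert E d0 i) ∨
      (∃ k : ℕ, Paper.boundaryVert E d0 k = Paper.boundaryVert E d0 (k + 3) ∧
        Paper.boundaryVert E d0 (k + 4) = Paper.boundaryVert E d0 (k + 7) ∧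
        [Paper.boundaryVert E d0 k, Paper.boundaryVert E d0 (k + 1),
         Paper.boundaryVert E d0 (k + 2), Paper.boundaryVert E d0 (k + 4),
         Paper.boundaryVert E d0 (k + 5), Paper.boundaryVert E d0 (k + 6)].Nodup) ∨
      (∃ k : ℕ, Paper.boundaryVert E d0 k = Paper.boundaryVert E d0 (k + 3) ∧
        [Paper.boundaryVert E d0 k, Paper.boundaryVert E d0 (k + 1),
         Paper.boundaryVert E d0 (k + 2), Paper.boundaryVert E d0 (k + 4),
         Paper.boundaryVert E d0 (k + 5), Paper.boundaryVert E d0 (k + 6),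
         Paper.boundaryVert E d0 (k + 7)].Nodup) :=
  statement13_general G E hmin h4
end

section
/- Let G be a connected plane graph with minimum degree at least 3 that contains no cycle of length 4, no cycle of length 7, no cycle of length 9, and no 5-cycle normally adjacent to a 3-cycle. Then the boundary walk of every 9-face of G consists either of one 3-cycle and one 6-cycle, or of three 3-cycles. -/
/-!
Walk around a 9-face: consecutive boundary vertices are adjacent, the walk never turns back
(minimum degree at least 2) and never uses a dart twice. In a graph without 4-cycles two
boundary vertices can then coincide only at distance 3 along the walk, and without 9-cycles
some such coincidence `w i = w (i + 3)` exists; each one cuts off a triangle. Two coincidences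
at distance 1 would repeat a dart and two at distance 2 would close a 4-cycle, so up to rotation
the set of coincidences is `{0}`, `{0, 3, 6}` or `{0, 4}`: one triangle and a 6-cycle, or three
triangles.
-/

namespace Paper

open SimpleGraph

variable {V : Type*} {G : SimpleGraph V}

theorem NoCycleLen.eq_of_square (h4 : NoCycleLen G 4) {a b c d : V} (hab : G.Adj a b)
    (hbc : G.Adj b c) (hcd : G.Adj c d) (hda : G.Adj d a) (hbd : b ≠ d) : a = c := by
  by_contra hac
  refine h4 a (.cons hab (.cons hbc (.cons hcd (.cons hda .nil)))) ?_ rfl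
  simp [Walk.isCycle_def, Walk.isTrail_def, hab.ne, hbc.ne, hcd.ne, hda.ne, hab.ne', hda.ne',
    hac, hbd, Ne.symm hac]

theorem NoCycleLen.not_injective_nine (h9 : NoCycleLen G 9) {w : ZMod 9 → V}
    (hadj : ∀ i, G.Adj (w i) (w (i + 1))) : ¬ Function.Injective w := by
  intro hw
  let p : G.Walk (w 1) (w 0) := .cons (hadj 1) (.cons (hadj 2) (.cons (hadj 3) (.cons (hadj 4)
    (.cons (hadj 5) (.cons (hadj 6) (.cons (hadj 7) (.cons (hadj 8) .nil)))))))
  refine h9 (w 0) (.cons (hadj 0) p) ((Walk.cons_isCycle_iff p (hadj 0)).2 ⟨?_, ?_⟩) rfl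
  · rw [Walk.isPath_def]
    exact List.Nodup.map hw (by decide : [1, 2, 3, 4, 5, 6, 7, 8, (0 : ZMod 9)].Nodup)
  · simp [p, hw.eq_iff]
    decide

theorem zmod_nine_cases (i : ZMod 9) :
    i = 0 ∨ i = 1 ∨ i = 2 ∨ i = 3 ∨ i = 4 ∨ i = 5 ∨ i = 6 ∨ i = 7 ∨ i = 8 := by
  revert i
  decide

theorem exists_rotation_of_zmod_nine {Q : ZMod 9 → Prop} (q0 : Q 0)
    (g1 : ∀ i, Q i → ¬ Q (i + 1)) (g2 : ∀ i, Q i → ¬ Q (i + 2))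
    (g3 : ∀ i, Q i → Q (i + 3) → Q (i + 6)) :
    ∃ k, (∀ i, Q (k + i) ↔ i = 0) ∨ (∀ i, Q (k + i) ↔ i = 0 ∨ i = 3 ∨ i = 6) ∨
      (∀ i, Q (k + i) ↔ i = 0 ∨ i = 4) := by
  have q1 : ¬ Q 1 := g1 0 q0
  have q2 : ¬ Q 2 := g2 0 q0
  have q7 : ¬ Q 7 := fun h => g2 7 h q0
  have q8 : ¬ Q 8 := fun h => g1 8 h q0
  by_cases q3 : Q 3
  · have q4 : ¬ Q 4 := g1 3 q3
    have q5 : ¬ Q 5 := g2 3 q3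
    have q6 : Q 6 := g3 0 q0 q3
    refine ⟨0, .inr (.inl fun i => ?_)⟩
    rcases zmod_nine_cases i with rfl | rfl | rfl | rfl | rfl | rfl | rfl | rfl | rfl <;>
      first | exact iff_of_true ‹_› (by decide) | exact iff_of_false ‹_› (by decide)
  have q6 : ¬ Q 6 := fun h => q3 (g3 6 h q0)
  by_cases q4 : Q 4
  · have q5 : ¬ Q 5 := g1 4 q4
    refine ⟨0, .inr (.inr fun i => ?_)⟩
    rcases zmod_nine_cases i with rfl | rfl | rfl | rfl | rfl | rfl | rfl | rfl | rfl <;>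
      first | exact iff_of_true ‹_› (by decide) | exact iff_of_false ‹_› (by decide)
  by_cases q5 : Q 5
  · refine ⟨5, .inr (.inr fun i => ?_)⟩
    rcases zmod_nine_cases i with rfl | rfl | rfl | rfl | rfl | rfl | rfl | rfl | rfl <;>
      first | exact iff_of_true ‹_› (by decide) | exact iff_of_false ‹_› (by decide)
  · refine ⟨0, .inl fun i => ?_⟩
    rcases zmod_nine_cases i with rfl | rfl | rfl | rfl | rfl | rfl | rfl | rfl | rfl <;>
      first | exact iff_of_true ‹_› (by decide) | exact iff_of_false ‹_› (by decide)

/-- A closed walk `w 0, w 1, …, w (n - 1), w 0` that never turns back and never traverses the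
same dart twice, as the boundary walk of a face does. -/
structure IsBoundaryWalk (G : SimpleGraph V) {n : ℕ} (w : ZMod n → V) : Prop where
  adj : ∀ i, G.Adj (w i) (w (i + 1))
  ne_add_two : ∀ i, w i ≠ w (i + 2)
  eq_of_eq_of_eq_add_one : ∀ i j, w i = w j → w (i + 1) = w (j + 1) → i = j

namespace IsBoundaryWalk

section

variable {n : ℕ} {w : ZMod n → V}

theorem rotate (hw : IsBoundaryWalk G w) (k : ZMod n) :
    IsBoundaryWalk G (fun i => w (k + i)) :=
  ⟨fun i => by simpa only [add_assoc] using hw.adj (k + i),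
    fun i => by simpa only [add_assoc] using hw.ne_add_two (k + i),
    fun i j h h' => add_left_cancel
      (hw.eq_of_eq_of_eq_add_one _ _ h (by simpa only [add_assoc] using h'))⟩

theorem adj_of_add_one_eq (hw : IsBoundaryWalk G w) {i j : ZMod n} (h : i + 1 = j) :
    G.Adj (w i) (w j) :=
  h ▸ hw.adj i

theorem ne_of_add_two_eq (hw : IsBoundaryWalk G w) {i j : ZMod n} (h : i + 2 = j) :
    w i ≠ w j :=
  h ▸ hw.ne_add_two i

theorem ne_add_four (hw : IsBoundaryWalk G w) (h4 : NoCycleLen G 4) (i : ZMod n) :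
    w i ≠ w (i + 4) := by
  intro h
  refine hw.ne_add_two i (h4.eq_of_square (c := w (i + 2)) (d := w (i + 3)) (hw.adj i)
    (hw.adj_of_add_one_eq (by ring)) (hw.adj_of_add_one_eq (by ring)) ?_
    (hw.ne_of_add_two_eq (by ring)))
  rw [h]
  exact hw.adj_of_add_one_eq (by ring)

theorem ne_succ_of_eq_add_three (hw : IsBoundaryWalk G w) (h3 : (3 : ZMod n) ≠ 0)
    {i : ZMod n} (h : w i = w (i + 3)) : w (i + 1) ≠ w (i + 1 + 3) := by
  intro h'
  have := hw.eq_of_eq_of_eq_add_one i (i + 3) h (h'.trans (congrArg w (by ring)))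
  exact h3 (by simpa using this.symm)

theorem ne_add_two_of_eq_add_three (hw : IsBoundaryWalk G w) (h4 : NoCycleLen G 4)
    (h3 : (3 : ZMod n) ≠ 0) {i : ZMod n} (h : w i = w (i + 3)) :
    w (i + 2) ≠ w (i + 2 + 3) := by
  intro h'
  refine hw.ne_add_two i (h4.eq_of_square (c := w (i + 2)) (d := w (i + 4)) (hw.adj i)
    (hw.adj_of_add_one_eq (by ring)) ?_ ?_ ((hw.ne_succ_of_eq_add_three h3 h).trans_eq ?_))
  · rw [h']
    exact (hw.adj_of_add_one_eq (by ring)).symm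
  · rw [h]
    exact (hw.adj_of_add_one_eq (by ring)).symm
  · exact congrArg w (by ring)

end

variable {w : ZMod 9 → V}

theorem eq_iff_of_nine (hw : IsBoundaryWalk G w) (h4 : NoCycleLen G 4) {i j : ZMod 9} :
    w i = w j ↔ i = j ∨ (j = i + 3 ∧ w i = w (i + 3)) ∨ (i = j + 3 ∧ w j = w (j + 3)) := by
  refine ⟨fun h => ?_, ?_⟩
  · obtain ⟨d, rfl⟩ : ∃ d, j = i + d := ⟨j - i, by ring⟩
    rcases zmod_nine_cases d with rfl | rfl | rfl | rfl | rfl | rfl | rfl | rfl | rfl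
    · exact .inl (add_zero i).symm
    · exact absurd h (hw.adj i).ne
    · exact absurd h (hw.ne_add_two i)
    · exact .inr (.inl ⟨rfl, h⟩)
    · exact absurd h (hw.ne_add_four h4 i)
    · exact absurd (h.symm.trans (congrArg w (by grind))) (hw.ne_add_four h4 (i + 5))
    · exact .inr (.inr ⟨by grind, h.symm.trans (congrArg w (by grind))⟩)
    · exact absurd h.symm (hw.ne_of_add_two_eq (by grind))
    · exact absurd h.symm (hw.adj_of_add_one_eq (by grind)).ne
  · rintro (rfl | ⟨rfl, h⟩ | ⟨rfl, h⟩)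
    exacts [rfl, h, h.symm]

theorem exists_eq_add_three (hw : IsBoundaryWalk G w) (h4 : NoCycleLen G 4)
    (h9 : NoCycleLen G 9) : ∃ k, w k = w (k + 3) := by
  by_contra! h
  refine h9.not_injective_nine hw.adj fun i j hij => ?_
  rcases (hw.eq_iff_of_nine h4).1 hij with e | ⟨-, e⟩ | ⟨-, e⟩
  exacts [e, (h i e).elim, (h j e).elim]

theorem nodup_map (hw : IsBoundaryWalk G w) (h4 : NoCycleLen G 4) {S : ZMod 9 → Prop}
    (hS : ∀ i, w i = w (i + 3) ↔ S i) {l : List (ZMod 9)}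
    (hl : l.Pairwise fun x y => x ≠ y ∧ ¬ (y = x + 3 ∧ S x) ∧ ¬ (x = y + 3 ∧ S y)) :
    (l.map w).Nodup :=
  List.pairwise_map.2 <| hl.imp fun ⟨hxy, hx, hy⟩ e => by
    rcases (hw.eq_iff_of_nine h4).1 e with e | ⟨e, he⟩ | ⟨e, he⟩
    exacts [hxy e, hx ⟨e, (hS _).1 he⟩, hy ⟨e, (hS _).1 he⟩]

theorem nine_cases (hw : IsBoundaryWalk G w) (h4 : NoCycleLen G 4) (h9 : NoCycleLen G 9) :
    ∃ k : ZMod 9,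
      (w k = w (k + 3) ∧
        [w k, w (k + 1), w (k + 2), w (k + 4), w (k + 5), w (k + 6), w (k + 7),
          w (k + 8)].Nodup) ∨
      (w k = w (k + 3) ∧ w k = w (k + 6) ∧
        [w k, w (k + 1), w (k + 2), w (k + 4), w (k + 5), w (k + 7), w (k + 8)].Nodup) ∨
      (w k = w (k + 3) ∧ w (k + 4) = w (k + 7) ∧
        [w k, w (k + 1), w (k + 2), w (k + 4), w (k + 5), w (k + 6), w (k + 8)].Nodup) := by
  obtain ⟨k₀, hk₀⟩ := hw.exists_eq_add_three h4 h9
  have h3 : (3 : ZMod 9) ≠ 0 := by decide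
  have hw₀ := hw.rotate k₀
  obtain ⟨k₁, hk₁⟩ := exists_rotation_of_zmod_nine
    (Q := fun i => w (k₀ + i) = w (k₀ + (i + 3))) (by simpa using hk₀)
    (fun _ h => hw₀.ne_succ_of_eq_add_three h3 h)
    (fun _ h => hw₀.ne_add_two_of_eq_add_three h4 h3 h)
    (fun i h h' => by
      rw [show i + 6 + 3 = i by grind, show i + 6 = i + 3 + 3 by ring]
      exact (h.trans h').symm)
  have hw₁ := hw.rotate (k₀ + k₁)
  have hS {S : ZMod 9 → Prop} (h : ∀ i, w (k₀ + (k₁ + i)) = w (k₀ + (k₁ + i + 3)) ↔ S i) :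
      ∀ i, w (k₀ + k₁ + i) = w (k₀ + k₁ + (i + 3)) ↔ S i := by
    simpa only [add_assoc] using h
  refine ⟨k₀ + k₁, ?_⟩
  rcases hk₁ with hk₁ | hk₁ | hk₁
  · refine .inl ⟨by simpa using (hS hk₁ 0).2 rfl, ?_⟩
    simpa using hw₁.nodup_map h4 (hS hk₁) (l := [0, 1, 2, 4, 5, 6, 7, 8]) (by decide)
  · refine .inr (.inl ⟨by simpa using (hS hk₁ 0).2 (by decide), ?_, ?_⟩)
    · have h₀ := (hS hk₁ 0).2 (by decide)
      have h₃ := (hS hk₁ 3).2 (by decide)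
      norm_num at h₀ h₃
      exact h₀.trans h₃
    simpa using hw₁.nodup_map h4 (hS hk₁) (l := [0, 1, 2, 4, 5, 7, 8]) (by decide)
  · refine .inr (.inr ⟨by simpa using (hS hk₁ 0).2 (by decide), ?_, ?_⟩)
    · exact ((hS hk₁ 4).2 (by decide)).trans (by norm_num)
    simpa using hw₁.nodup_map h4 (hS hk₁) (l := [0, 1, 2, 4, 5, 6, 8]) (by decide)

end IsBoundaryWalk

namespace PlaneEmbedding

variable (E : PlaneEmbedding G)

theorem facePerm_fst (d : G.Dart) : (E.facePerm d).fst = d.snd :=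
  E.fst_rot _

theorem facePerm_ne_symm [Fintype V] [DecidableRel G.Adj] {d : G.Dart}
    (hd : 2 ≤ G.degree d.snd) : E.facePerm d ≠ d.symm := by
  intro h
  have hfix : Function.IsFixedPt E.rot d.symm := h
  obtain ⟨u, hu, hud⟩ := Finset.exists_mem_ne (G.card_neighborFinset_eq_degree _ ▸ hd) d.fst
  obtain ⟨n, hn⟩ := E.rot_cyclic d.symm ⟨(d.snd, u), (G.mem_neighborFinset _ _).1 hu⟩ rfl
  rw [hfix.perm_zpow n] at hn
  exact hud (congrArg (fun e : G.Dart => e.snd) hn).symm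

theorem isCycleOn_faceOf (d : G.Dart) : E.facePerm.IsCycleOn (faceOf E d) :=
  ⟨⟨fun _ he => Equiv.Perm.sameCycle_apply_right.2 he, E.facePerm.injective.injOn,
    fun e he => ⟨E.facePerm.symm e, Equiv.Perm.sameCycle_symm_apply_right.2 he, by simp⟩⟩,
    fun _ hx _ hy => hx.symm.trans hy⟩

theorem facePerm_pow_apply_eq_iff [Finite G.Dart] (d : G.Dart) {m n : ℕ} :
    (E.facePerm ^ m) d = (E.facePerm ^ n) d ↔ m ≡ n [MOD faceSize E d] := by
  classical
  have hfin := (faceOf E d).toFinite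
  rw [faceSize, Set.ncard_eq_toFinset_card _ hfin]
  exact Equiv.Perm.IsCycleOn.pow_apply_eq_pow_apply (by simpa using E.isCycleOn_faceOf d)
    (by simp [faceOf, Equiv.Perm.SameCycle.refl])

theorem toProd_facePerm_pow_apply (d : G.Dart) (j : ℕ) :
    ((E.facePerm ^ j) d).toProd = (boundaryVert E d j, boundaryVert E d (j + 1)) := by
  refine Prod.ext rfl ?_
  change _ = ((E.facePerm ^ (j + 1)) d).fst
  rw [pow_succ', Equiv.Perm.mul_apply, facePerm_fst]

/-- Meaningful only for `n = faceSize E d`, the period of `boundaryVert E d`. -/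
def faceWalk (d : G.Dart) (n : ℕ) (i : ZMod n) : V :=
  boundaryVert E d i.val

theorem faceWalk_natCast [Finite G.Dart] {d : G.Dart} {n : ℕ} (hn : faceSize E d = n)
    (j : ℕ) : E.faceWalk d n j = boundaryVert E d j := by
  subst hn
  rw [faceWalk, ZMod.val_natCast, boundaryVert, boundaryVert,
    (E.facePerm_pow_apply_eq_iff d).2 (Nat.mod_modEq j _)]

theorem isBoundaryWalk_faceWalk [Fintype V] [DecidableRel G.Adj] {d : G.Dart} {n : ℕ}
    [NeZero n] (hdeg : ∀ v, 2 ≤ G.degree v) (hn : faceSize E d = n) :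
    IsBoundaryWalk G (E.faceWalk d n) := by
  have hcast := E.faceWalk_natCast hn
  have hsucc (j : ℕ) : E.faceWalk d n (j + 1) = boundaryVert E d (j + 1) := by
    rw [← hcast]
    push_cast
    rfl
  have hdart (j : ℕ) :
      ((E.facePerm ^ j) d).toProd = (E.faceWalk d n j, E.faceWalk d n (j + 1)) := by
    rw [hcast, hsucc, toProd_facePerm_pow_apply]
  refine ⟨fun i => ?_, fun i => ?_, fun i j hij hij' => ?_⟩
  · obtain ⟨j, rfl⟩ := ZMod.natCast_zmod_surjective i
    have h := ((E.facePerm ^ j) d).adj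
    rwa [hdart] at h
  · obtain ⟨j, rfl⟩ := ZMod.natCast_zmod_surjective i
    intro h
    refine E.facePerm_ne_symm (hdeg _) (Dart.ext _ _ ?_ : E.facePerm ((E.facePerm ^ j) d) = _)
    rw [← Equiv.Perm.mul_apply, ← pow_succ', Dart.symm_toProd, hdart, hdart]
    push_cast
    rw [add_assoc, one_add_one_eq_two, ← h, Prod.swap_prod_mk]
  · obtain ⟨i, rfl⟩ := ZMod.natCast_zmod_surjective i
    obtain ⟨j, rfl⟩ := ZMod.natCast_zmod_surjective j
    have : (E.facePerm ^ i) d = (E.facePerm ^ j) d :=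
      Dart.ext _ _ (by rw [hdart, hdart, hij, hij'])
    exact (ZMod.natCast_eq_natCast_iff _ _ _).2 (hn ▸ (E.facePerm_pow_apply_eq_iff d).1 this)

end PlaneEmbedding

end Paper

open SimpleGraph

theorem statement14_general {V : Type*} [Fintype V] (G : SimpleGraph V) [DecidableRel G.Adj]
    (E : Paper.PlaneEmbedding G)
    (hmin : ∀ v : V, 3 ≤ G.degree v)
    (h4 : Paper.NoCycleLen G 4)
    (h9 : Paper.NoCycleLen G 9) :
    ∀ d0 : G.Dart, Paper.faceSize E d0 = 9 →
      (∃ k : ℕ, Paper.boundaryVert E d0 k = Paper.boundaryVert E d0 (k + 3) ∧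
        [Paper.boundaryVert E d0 k, Paper.boundaryVert E d0 (k + 1),
         Paper.boundaryVert E d0 (k + 2), Paper.boundaryVert E d0 (k + 4),
         Paper.boundaryVert E d0 (k + 5), Paper.boundaryVert E d0 (k + 6),
         Paper.boundaryVert E d0 (k + 7), Paper.boundaryVert E d0 (k + 8)].Nodup) ∨
      (∃ k : ℕ, Paper.boundaryVert E d0 k = Paper.boundaryVert E d0 (k + 3) ∧
        Paper.boundaryVert E d0 k = Paper.boundaryVert E d0 (k + 6) ∧
        [Paper.boundaryVert E d0 k, Paper.boundaryVert E d0 (k + 1),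
         Paper.boundaryVert E d0 (k + 2), Paper.boundaryVert E d0 (k + 4),
         Paper.boundaryVert E d0 (k + 5), Paper.boundaryVert E d0 (k + 7),
         Paper.boundaryVert E d0 (k + 8)].Nodup) ∨
      (∃ k : ℕ, Paper.boundaryVert E d0 k = Paper.boundaryVert E d0 (k + 3) ∧
        Paper.boundaryVert E d0 (k + 4) = Paper.boundaryVert E d0 (k + 7) ∧
        [Paper.boundaryVert E d0 k, Paper.boundaryVert E d0 (k + 1),
         Paper.boundaryVert E d0 (k + 2), Paper.boundaryVert E d0 (k + 4),
         Paper.boundaryVert E d0 (k + 5), Paper.boundaryVert E d0 (k + 6),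
         Paper.boundaryVert E d0 (k + 8)].Nodup) := by
  intro d0 hsize
  have hw := E.isBoundaryWalk_faceWalk (fun v => (hmin v).trans' (by norm_num)) hsize
  obtain ⟨k, hk⟩ := hw.nine_cases h4 h9
  have hv (m : ℕ) : Paper.boundaryVert E d0 (k.val + m) = E.faceWalk d0 9 (k + m) := by
    rw [← E.faceWalk_natCast hsize, Nat.cast_add, ZMod.natCast_zmod_val]
  have hv₀ : Paper.boundaryVert E d0 k.val = E.faceWalk d0 9 k := by simpa using hv 0
  rcases hk with h | h | h
  · exact .inl ⟨k.val, by simpa only [hv, hv₀, Nat.cast_ofNat, Nat.cast_one] using h⟩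
  · exact .inr (.inl ⟨k.val, by simpa only [hv, hv₀, Nat.cast_ofNat, Nat.cast_one] using h⟩)
  · exact .inr (.inr ⟨k.val, by simpa only [hv, hv₀, Nat.cast_ofNat, Nat.cast_one] using h⟩)

/-- The boundary walk of every 9-face consists of one 3-cycle and one 6-cycle, or
of three 3-cycles. -/
theorem statement14 {V : Type*} [Fintype V] (G : SimpleGraph V) [DecidableRel G.Adj]
    (hconn : G.Connected)
    (E : Paper.PlaneEmbedding G) (hE : E.IsPlane)
    (hmin : ∀ v : V, 3 ≤ G.degree v)
    (h4 : Paper.NoCycleLen G 4) (h7 : Paper.NoCycleLen G 7)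
    (h9 : Paper.NoCycleLen G 9) (h53 : Paper.No5CycleNormAdj3 G) :
    ∀ d0 : G.Dart, Paper.faceSize E d0 = 9 →
      (∃ k : ℕ, Paper.boundaryVert E d0 k = Paper.boundaryVert E d0 (k + 3) ∧
        [Paper.boundaryVert E d0 k, Paper.boundaryVert E d0 (k + 1),
         Paper.boundaryVert E d0 (k + 2), Paper.boundaryVert E d0 (k + 4),
         Paper.boundaryVert E d0 (k + 5), Paper.boundaryVert E d0 (k + 6),
         Paper.boundaryVert E d0 (k + 7), Paper.boundaryVert E d0 (k + 8)].Nodup) ∨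
      (∃ k : ℕ, Paper.boundaryVert E d0 k = Paper.boundaryVert E d0 (k + 3) ∧
        Paper.boundaryVert E d0 k = Paper.boundaryVert E d0 (k + 6) ∧
        [Paper.boundaryVert E d0 k, Paper.boundaryVert E d0 (k + 1),
         Paper.boundaryVert E d0 (k + 2), Paper.boundaryVert E d0 (k + 4),
         Paper.boundaryVert E d0 (k + 5), Paper.boundaryVert E d0 (k + 7),
         Paper.boundaryVert E d0 (k + 8)].Nodup) ∨
      (∃ k : ℕ, Paper.boundaryVert E d0 k = Paper.boundaryVert E d0 (k + 3) ∧
        Paper.boundaryVert E d0 (k + 4) = Paper.boundaryVert E d0 (k + 7) ∧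
        [Paper.boundaryVert E d0 k, Paper.boundaryVert E d0 (k + 1),
         Paper.boundaryVert E d0 (k + 2), Paper.boundaryVert E d0 (k + 4),
         Paper.boundaryVert E d0 (k + 5), Paper.boundaryVert E d0 (k + 6),
         Paper.boundaryVert E d0 (k + 8)].Nodup) :=
  statement14_general G E hmin h4 h9
end
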